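/- arXiv:2310.11359 — 3 statements merged into one kernel-verified Lean document; each statement's English description precedes it below -/
import Mathlib

section
/- Let n ≥ 1, 1 ≤ k ≤ n, and let v₁,…,v_k ∈ ℤⁿ. For every integer d, the following are equivalent: (i) d divides det(v₁ | … | v_k | w_{k+1} | … | w_n) for every choice of vectors w_{k+1},…,w_n ∈ ℤⁿ; (ii) d divides every k×k minor of the n×k integer matrix (v₁ | … | v_k). Consequently, the integral index D_IA(v₁,…,v_k), defined as the greatest common divisor of all the determinants in (i), equals the greatest common divisor of all k×k minors of (v₁ | … | v_k). -/
/-!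
Write `n = k + m` and let `A = (v₁ | … | v_k)`. The determinant of `(A | B)` is multilinear in
the `m` columns of `B`, so it is an integer combination of the determinants of
`(A | e_{p₁} | … | e_{pₘ})` for unit vectors `e_p`. Such a determinant vanishes unless the `pᵢ`
are distinct; if they are, moving the rows `pᵢ` to the bottom makes the matrix block lower
triangular with an identity block, so it is `±` the minor of `A` on the complementary rows.
Hence every determinant `det (A | B)` is a combination of maximal minors of `A`, and every
maximal minor is, up to sign, one of these determinants.
-/

/-- `g` is a greatest common divisor of the set `S ⊆ ℤ`: it divides every element of `S`,
and every common divisor of `S` divides `g`. -/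
def IsGcdOfSet (S : Set ℤ) (g : ℤ) : Prop :=
  (∀ x ∈ S, g ∣ x) ∧ ∀ d : ℤ, (∀ x ∈ S, d ∣ x) → d ∣ g

open Function Matrix

theorem Function.Injective.exists_sumEquiv_comp_inl {α β γ : Type*} [Fintype α] [Fintype β]
    [Fintype γ] [DecidableEq β] {f : α → β} (hf : Injective f)
    (h : Fintype.card α + Fintype.card γ = Fintype.card β) :
    ∃ σ : α ⊕ γ ≃ β, σ ∘ Sum.inl = f := by
  have hcard : Fintype.card γ = Fintype.card {b // b ∉ Set.range f} := by
    rw [Fintype.card_subtype_compl, Set.card_range_of_injective hf]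
    omega
  exact ⟨(Equiv.sumCongr (Equiv.ofInjective f hf) (Fintype.equivOfCardEq hcard)).trans
    (Equiv.sumCompl (· ∈ Set.range f)), rfl⟩

namespace Matrix

variable {R : Type*} [CommRing R] {ι κ μ : Type*} [DecidableEq ι]
  [Fintype κ] [DecidableEq κ] [Fintype μ] [DecidableEq μ]

theorem associated_det_fromCols_one_submatrix (A : Matrix ι κ R) (e σ : κ ⊕ μ ≃ ι) :
    Associated ((fromCols A ((1 : Matrix ι ι R).submatrix id (σ ∘ Sum.inr))).submatrix e id).det
      (A.submatrix (σ ∘ Sum.inl) id).det := by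
  set M := fromCols A ((1 : Matrix ι ι R).submatrix id (σ ∘ Sum.inr))
  have hblocks : M.submatrix σ id =
      fromBlocks (A.submatrix (σ ∘ Sum.inl) id) 0 (A.submatrix (σ ∘ Sum.inr) id) 1 := by
    ext (a | a) (b | b) <;> simp [M, one_apply]
  have hperm : M.submatrix σ id = (M.submatrix e id).submatrix (σ.trans e.symm) id := by
    ext; simp
  have hdet := det_permute (σ.trans e.symm) (M.submatrix e id)
  rw [← hperm, hblocks, det_fromBlocks_zero₁₂, det_one, mul_one] at hdet
  rw [hdet]
  exact associated_unit_mul_right _ _ ((Equiv.Perm.sign _).isUnit.map (Int.castRingHom R))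

theorem det_fromCols_one_submatrix_of_not_injective (A : Matrix ι κ R) (e : κ ⊕ μ ≃ ι)
    {p : μ → ι} (hp : ¬ Injective p) :
    ((fromCols A ((1 : Matrix ι ι R).submatrix id p)).submatrix e id).det = 0 := by
  obtain ⟨s, t, hst, hne⟩ : ∃ s t, p s = p t ∧ s ≠ t := by simpa [Injective] using hp
  refine det_zero_of_column_eq (i := Sum.inr s) (j := Sum.inr t) (by simpa using hne) fun x => ?_
  simp only [submatrix_apply, id_eq, fromCols_apply_inr]
  rw [hst]

theorem det_fromCols_submatrix_eq_sum [Fintype ι] (A : Matrix ι κ R) (B : Matrix ι μ R)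
    (e : κ ⊕ μ ≃ ι) :
    ((fromCols A B).submatrix e id).det = ∑ p : μ → ι,
      (∏ t, B (p t) t) * ((fromCols A ((1 : Matrix ι ι R).submatrix id p)).submatrix e id).det := by
  have hcol : ∀ t, (fun x => B (e x) t) = ∑ p, B p t • fun x => (1 : Matrix ι ι R) (e x) p := by
    intro t
    ext x
    simp [Finset.sum_apply, one_apply]
  have hdet : ∀ C : Matrix ι μ R, ((fromCols A C).submatrix e id).det =
      (detRowAlternating : (κ ⊕ μ → R) [⋀^(κ ⊕ μ)]→ₗ[R] R).toMultilinearMap.currySum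
        (fun j x => A (e x) j) (fun t x => C (e x) t) := by
    intro C
    rw [← det_transpose, MultilinearMap.currySum_apply']
    congr 1
    ext (j | t) x <;> rfl
  rw [hdet, funext hcol, MultilinearMap.map_sum]
  refine Finset.sum_congr rfl fun p _ => ?_
  rw [MultilinearMap.map_smul_univ, hdet, smul_eq_mul]
  rfl

theorem dvd_det_fromCols_one_submatrix [Fintype ι] {A : Matrix ι κ R} {d : R}
    (hA : ∀ r : κ → ι, Injective r → d ∣ (A.submatrix r id).det) (e : κ ⊕ μ ≃ ι) (p : μ → ι) :
    d ∣ ((fromCols A ((1 : Matrix ι ι R).submatrix id p)).submatrix e id).det := by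
  by_cases hp : Injective p
  · obtain ⟨τ, hτ⟩ := hp.exists_sumEquiv_comp_inl (γ := κ)
      (by rw [← Fintype.card_congr e, Fintype.card_sum, add_comm])
    have hσ : (Equiv.sumComm κ μ).trans τ ∘ Sum.inr = p := hτ
    rw [← hσ, (associated_det_fromCols_one_submatrix A e _).dvd_iff_dvd_right]
    exact hA _ ((Equiv.injective _).comp Sum.inl_injective)
  · rw [det_fromCols_one_submatrix_of_not_injective A e hp]
    exact dvd_zero d

theorem forall_dvd_det_fromCols_iff [Fintype ι] (A : Matrix ι κ R) (e : κ ⊕ μ ≃ ι) (d : R) :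
    (∀ B : Matrix ι μ R, d ∣ ((fromCols A B).submatrix e id).det) ↔
      ∀ r : κ → ι, Injective r → d ∣ (A.submatrix r id).det := by
  refine ⟨fun h r hr => ?_, fun hA B => ?_⟩
  · obtain ⟨σ, hσ⟩ := hr.exists_sumEquiv_comp_inl (γ := μ)
      (by rw [← Fintype.card_congr e, Fintype.card_sum])
    rw [← hσ, ← (associated_det_fromCols_one_submatrix A e σ).dvd_iff_dvd_right]
    exact h _
  · rw [det_fromCols_submatrix_eq_sum]
    exact Finset.dvd_sum fun p _ => (dvd_det_fromCols_one_submatrix hA e p).mul_left _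

theorem det_of_dite_lt_eq_det_fromCols {k m : ℕ} (v : Fin k → Fin (k + m) → R)
    (w : Fin (k + m) → Fin (k + m) → R) :
    (of fun i j : Fin (k + m) => if h : (j : ℕ) < k then v ⟨j, h⟩ i else w j i).det =
      ((fromCols (of fun i j => v j i) (of fun i t => w (Fin.natAdd k t) i)).submatrix
        finSumFinEquiv id).det := by
  rw [← det_submatrix_equiv_self finSumFinEquiv]
  congr 1
  ext x (j | t) <;> simp

end Matrix

theorem isGcdOfSet_congr {S T : Set ℤ} (h : ∀ d : ℤ, (∀ x ∈ S, d ∣ x) ↔ ∀ x ∈ T, d ∣ x) (g : ℤ) :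
    IsGcdOfSet S g ↔ IsGcdOfSet T g := by
  simp only [IsGcdOfSet, h]

theorem stmt0_general (n k : ℕ) (hkn : k ≤ n) (v : Fin k → Fin n → ℤ) :
    (∀ d : ℤ,
      (∀ w : Fin n → Fin n → ℤ,
          d ∣ (Matrix.of fun i j : Fin n =>
            if h : (j : ℕ) < k then v ⟨j, h⟩ i else w j i).det) ↔
      (∀ r : Fin k → Fin n, Function.Injective r →
          d ∣ (Matrix.of fun i j : Fin k => v j (r i)).det)) ∧
    (∀ g : ℤ, 0 ≤ g →
      (IsGcdOfSet {x : ℤ | ∃ w : Fin n → Fin n → ℤ,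
          x = (Matrix.of fun i j : Fin n =>
            if h : (j : ℕ) < k then v ⟨j, h⟩ i else w j i).det} g ↔
       IsGcdOfSet {x : ℤ | ∃ r : Fin k → Fin n, Function.Injective r ∧
          x = (Matrix.of fun i j : Fin k => v j (r i)).det} g)) := by
  obtain ⟨m, rfl⟩ := Nat.exists_eq_add_of_le hkn
  have hsurj : Surjective fun (w : Fin (k + m) → Fin (k + m) → ℤ) (i) (t : Fin m) =>
      w (Fin.natAdd k t) i :=
    fun B => ⟨Fin.addCases (fun _ _ => 0) (fun t i => B i t), by ext; simp⟩
  have hdvd : ∀ d : ℤ,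
      (∀ w : Fin (k + m) → Fin (k + m) → ℤ,
          d ∣ (of fun i j : Fin (k + m) => if h : (j : ℕ) < k then v ⟨j, h⟩ i else w j i).det) ↔
      ∀ r : Fin k → Fin (k + m), Injective r → d ∣ (of fun i j : Fin k => v j (r i)).det := by
    intro d
    simp_rw [det_of_dite_lt_eq_det_fromCols]
    exact hsurj.forall.symm.trans (forall_dvd_det_fromCols_iff _ finSumFinEquiv d)
  refine ⟨hdvd, fun g _ => isGcdOfSet_congr (fun d => ?_) g⟩
  simpa [forall_comm (α := ℤ)] using hdvd d

/-- for `v₁, …, v_k ∈ ℤⁿ`, an integer `d` divides every determinant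
`det (v₁ | … | v_k | w_{k+1} | … | w_n)` (for all choices of `w`'s in `ℤⁿ`) if and only if it
divides every `k × k` minor of the `n × k` matrix `(v₁ | … | v_k)`.  Consequently the integral
index `D_IA(v₁,…,v_k)`, the gcd of all such determinants, equals the gcd of all `k × k` minors. -/
theorem stmt0 (n k : ℕ) (hn : 1 ≤ n) (hk : 1 ≤ k) (hkn : k ≤ n) (v : Fin k → Fin n → ℤ) :
    (∀ d : ℤ,
      (∀ w : Fin n → Fin n → ℤ,
          d ∣ (Matrix.of fun i j : Fin n =>
            if h : (j : ℕ) < k then v ⟨j, h⟩ i else w j i).det) ↔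
      (∀ r : Fin k → Fin n, Function.Injective r →
          d ∣ (Matrix.of fun i j : Fin k => v j (r i)).det)) ∧
    (∀ g : ℤ, 0 ≤ g →
      (IsGcdOfSet {x : ℤ | ∃ w : Fin n → Fin n → ℤ,
          x = (Matrix.of fun i j : Fin n =>
            if h : (j : ℕ) < k then v ⟨j, h⟩ i else w j i).det} g ↔
       IsGcdOfSet {x : ℤ | ∃ r : Fin k → Fin n, Function.Injective r ∧
          x = (Matrix.of fun i j : Fin k => v j (r i)).det} g)) :=
  stmt0_general n k hkn v
end

section
/- Let v₁,…,v_k ∈ ℤⁿ be linearly independent over ℚ, with k ≤ n. Let S denote the subgroup of ℤⁿ generated by v₁,…,v_k (the ℤ-span), and let L denote the subgroup {x ∈ ℤⁿ : x lies in the ℚ-span of v₁,…,v_k} (equivalently, the ℝ-span intersected with ℤⁿ). Then S has finite index in L, and this index [L : S] equals the greatest common divisor of all k×k minors of the n×k matrix (v₁ | … | v_k). -/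
/-- The coordinatewise cast `(ℤⁿ →+ ℚⁿ)`. -/
def intCastPi (n : ℕ) : (Fin n → ℤ) →+ (Fin n → ℚ) where
  toFun x := fun j => (x j : ℚ)
  map_zero' := by funext j; simp
  map_add' x y := by funext j; simp

/-!
Choose a Smith normal form basis `u` of `ℤⁿ` for `S = span_ℤ{vⱼ}`: then `S` is spanned by
nonzero multiples `aᵢ u_{f(i)}`, so the lattice `L` of integer points of `span_ℚ{vⱼ}` is
`span_ℤ{u_{f(i)}}`. Writing `vⱼ = ∑ᵢ Cᵢⱼ u_{f(i)}`, the index `[L : S]` is `|det C|`, and the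
matrix `(v₁ | … | v_k)` factors as `U_f C` with `U_f` the columns `f` of the unimodular matrix
of `u`. So every maximal minor of it is a maximal minor of `U_f` times `det C`, and the maximal
minors of `U_f` are coprime: modulo any prime `p` the columns of `U_f` stay linearly
independent, so some maximal minor is nonzero mod `p`.
-/

open Module Submodule Set

namespace Matrix

variable {m κ : Type*} [Fintype m] [Fintype κ] [DecidableEq κ]

theorem exists_det_submatrix_ne_zero {K : Type*} [Field K] (M : Matrix m κ K)
    (hM : LinearIndependent K M.col) : ∃ r : κ ↪ m, (M.submatrix r id).det ≠ 0 := by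
  obtain ⟨t, s, hs, hspan, hli⟩ := exists_linearIndependent' K M.row
  have : Fintype t := Fintype.ofInjective s hs
  have hcard : Fintype.card κ = Fintype.card t := by
    rw [linearIndependent_iff_card_eq_finrank_span.mp hli, Set.finrank, hspan,
      ← rank_eq_finrank_span_row, ← rank_transpose,
      LinearIndependent.rank_matrix (by rwa [row_transpose])]
  let e := Fintype.equivOfCardEq hcard
  refine ⟨⟨s ∘ e, hs.comp e.injective⟩, ?_⟩
  rw [← isUnit_iff_ne_zero, ← isUnit_iff_isUnit_det, ← linearIndependent_rows_iff_isUnit]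
  exact hli.comp e e.injective

theorem gcd_det_submatrix_eq_one_of_isUnit_det [DecidableEq m] {U : Matrix m m ℤ}
    (hU : IsUnit U.det) (f : κ ↪ m) :
    Finset.univ.gcd (fun r : κ ↪ m => (U.submatrix r f).det) = 1 := by
  rw [← Finset.normalize_gcd, normalize_eq_one]
  by_contra hunit
  obtain ⟨q, hq, hqdvd⟩ := Int.exists_prime_and_dvd (mt Int.isUnit_iff_natAbs_eq.mpr hunit)
  have : Fact q.natAbs.Prime := ⟨Int.prime_iff_natAbs_prime.mp hq⟩
  let π := Int.castRingHom (ZMod q.natAbs)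
  have hcols : LinearIndependent (ZMod q.natAbs) (π.mapMatrix U).col := by
    rw [linearIndependent_cols_iff_isUnit, isUnit_iff_isUnit_det, ← RingHom.map_det]
    exact hU.map π
  obtain ⟨r, hr⟩ := exists_det_submatrix_ne_zero _ (hcols.comp f f.injective)
  have hdvd : q ∣ (U.submatrix r f).det := hqdvd.trans (Finset.gcd_dvd (Finset.mem_univ r))
  apply hr
  change (π.mapMatrix (U.submatrix r f)).det = 0
  rw [← RingHom.map_det, eq_intCast, ZMod.intCast_zmod_eq_zero_iff_dvd, Int.natCast_natAbs,
    abs_dvd]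
  exact hdvd

theorem gcd_det_submatrix_mul {R : Type*} [CommRing R] [StrongNormalizedGCDMonoid R]
    (M : Matrix m κ R) (C : Matrix κ κ R) :
    Finset.univ.gcd (fun r : κ ↪ m => ((M * C).submatrix r id).det) =
      Finset.univ.gcd (fun r : κ ↪ m => (M.submatrix r id).det) * normalize C.det := by
  simp_rw [← Finset.gcd_mul_right, ← det_mul, submatrix_mul _ _ _ id _ Function.bijective_id,
    submatrix_id_id]

theorem gcd_det_submatrix_submatrix_mul [DecidableEq m] {U : Matrix m m ℤ} (hU : IsUnit U.det)
    (f : κ ↪ m) (C : Matrix κ κ ℤ) :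
    Finset.univ.gcd (fun r : κ ↪ m => ((U.submatrix id f * C).submatrix r id).det) =
      normalize C.det := by
  rw [gcd_det_submatrix_mul]
  simp_rw [submatrix_submatrix, Function.id_comp, Function.comp_id]
  rw [gcd_det_submatrix_eq_one_of_isUnit_det hU f, one_mul]

theorem gcd_det_submatrix_ne_zero {M : Matrix m κ ℤ}
    (hM : LinearIndependent ℚ (M.map (Int.castRingHom ℚ)).col) :
    Finset.univ.gcd (fun r : κ ↪ m => (M.submatrix r id).det) ≠ 0 := by
  obtain ⟨r, hr⟩ := exists_det_submatrix_ne_zero _ hM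
  intro h
  apply hr
  change ((Int.castRingHom ℚ).mapMatrix (M.submatrix r id)).det = 0
  rw [← RingHom.map_det, Finset.gcd_eq_zero_iff.mp h r (Finset.mem_univ r), map_zero]

end Matrix

section Saturation

variable {R K M V ι : Type*} [CommRing R] [Field K] [Algebra R K] [IsFractionRing R K]
  [AddCommGroup M] [Module R M] [AddCommGroup V] [Module R V] [Module K V] [IsScalarTower R K V]

theorem Module.Basis.comap_span_image_eq (b : Basis ι R M) (φ : M →ₗ[R] V)
    [IsLocalizedModule (nonZeroDivisors R) φ] (s : Set ι) :
    ((span K (φ '' (b '' s))).restrictScalars R).comap φ = span R (b '' s) := by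
  let bK := b.ofIsLocalizedModule K (nonZeroDivisors R) φ
  have himage : φ '' (b '' s) = bK '' s := by
    rw [Set.image_image]; simp [bK]
  have hsupport (x : M) : (bK.repr (φ x)).support = (b.repr x).support := by
    ext i
    simp [bK, map_eq_zero_iff _ (IsFractionRing.injective R K)]
  ext x
  rw [mem_comap, restrictScalars_mem, himage, bK.mem_span_image, b.mem_span_image, hsupport]

theorem exists_basis_comap_span_eq_span [IsDomain R] [IsPrincipalIdealRing R] [Finite ι]
    {κ : Type*} (b : Basis ι R M) (φ : M →ₗ[R] V) [IsLocalizedModule (nonZeroDivisors R) φ]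
    {v : κ → M} (hv : LinearIndependent R v) :
    ∃ (u : Basis ι R M) (f : κ ↪ ι),
      ((span K (range (φ ∘ v))).restrictScalars R).comap φ = span R (range (u ∘ f)) := by
  have hφ {s : Set M} {x : M} (hx : x ∈ span R s) : φ x ∈ span K (φ '' s) :=
    span_le_restrictScalars R K _ (apply_mem_span_image_of_mem_span φ hx)
  obtain ⟨m, snf⟩ := (span R (range v)).smithNormalForm b
  let e := snf.bN.indexEquiv (Basis.span hv)
  refine ⟨snf.bM, e.symm.toEmbedding.trans snf.f, ?_⟩
  have hrange : range (snf.bM ∘ e.symm.toEmbedding.trans snf.f) = snf.bM '' range snf.f := by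
    rw [range_comp]; congr 1; exact e.symm.surjective.range_comp _
  have hspan : span K (range (φ ∘ v)) = span K (φ '' (snf.bM '' range snf.f)) := by
    apply le_antisymm
    · rw [span_le]
      rintro _ ⟨j, rfl⟩
      refine hφ (snf.bM.mem_span_image.mpr fun i hi => ?_)
      by_contra hif
      exact Finsupp.mem_support_iff.mp hi
        (snf.repr_eq_zero_of_notMem_range ⟨v j, subset_span ⟨j, rfl⟩⟩ hif)
    · rw [span_le]
      rintro _ ⟨_, ⟨_, ⟨i, rfl⟩, rfl⟩, rfl⟩
      have ha : snf.a i ≠ 0 := fun h => snf.bN.ne_zero i (Subtype.ext (by simp [snf.snf, h]))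
      have ha' : algebraMap R K (snf.a i) ≠ 0 :=
        (map_ne_zero_iff _ (IsFractionRing.injective R K)).mpr ha
      have hbN := hφ (snf.bN i).2
      rw [snf.snf, map_smul, ← algebraMap_smul K, ← range_comp] at hbN
      simpa only [smul_smul, inv_mul_cancel₀ ha', one_smul, SetLike.mem_coe] using
        smul_mem _ (algebraMap R K (snf.a i))⁻¹ hbN
  rw [hrange, hspan, snf.bM.comap_span_image_eq]

end Saturation

theorem AddSubgroup.relIndex_closure_eq_natAbs_det {E κ : Type*} [AddCommGroup E] [Fintype κ]
    [DecidableEq κ] {v w : κ → E} (hv : LinearIndependent ℤ v) (hw : LinearIndependent ℤ w)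
    (C : Matrix κ κ ℤ) (hC : ∀ j, ∑ i, C i j • w i = v j) :
    (closure (range v)).relIndex (closure (range w)) = C.det.natAbs := by
  have hle : closure (range v) ≤ closure (range w) := by
    rw [closure_le]
    rintro _ ⟨j, rfl⟩
    rw [← hC j]
    exact sum_mem fun i _ => zsmul_mem (subset_closure (mem_range_self i)) _
  let basisOfClosure {u : κ → E} (hu : LinearIndependent ℤ u) :
      Basis κ ℤ (closure (range u)).toIntSubmodule :=
    (Basis.span hu).map (LinearEquiv.ofEq _ _ (toIntSubmodule_closure _).symm)
  have hcoe {u : κ → E} (hu : LinearIndependent ℤ u) (i : κ) :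
      (basisOfClosure hu i : E) = u i := by
    simp [basisOfClosure, Basis.span_apply]
  rw [relIndex_eq_natAbs_det _ _ hle (basisOfClosure hv) (basisOfClosure hw), Basis.det_apply]
  congr
  ext i j
  have hvj : (⟨basisOfClosure hv j, hle (basisOfClosure hv j).2⟩ :
      (closure (range w)).toIntSubmodule) = ∑ i, C i j • basisOfClosure hw i := by
    ext; simp [hcoe, hC]
  rw [Basis.toMatrix_apply, hvj, Basis.repr_sum_self]

theorem relIndex_closure_eq_gcd_det_submatrix {m κ : Type*} [Fintype m] [DecidableEq m]
    [Fintype κ] [DecidableEq κ] (u : Basis m ℤ (m → ℤ)) (f : κ ↪ m) {v : κ → m → ℤ}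
    (hv : LinearIndependent ℤ v) (hvu : ∀ j, v j ∈ span ℤ (range (u ∘ f))) :
    ((AddSubgroup.closure (range v)).relIndex (AddSubgroup.closure (range (u ∘ f))) : ℤ) =
      Finset.univ.gcd (fun r : κ ↪ m => ((Matrix.of fun i j => v j i).submatrix r id).det) := by
  choose c hc using fun j => (mem_span_range_iff_exists_fun ℤ).mp (hvu j)
  let C : Matrix κ κ ℤ := .of fun i j => c j i
  let U := (Pi.basisFun ℤ m).toMatrix u
  have hU : IsUnit U.det := by
    simpa only [Basis.det_apply] using (Pi.basisFun ℤ m).isUnit_det u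
  have hA : Matrix.of (fun i j => v j i) = U.submatrix id f * C := by
    ext p j
    rw [Matrix.of_apply, ← hc j]
    simp [Matrix.mul_apply, U, C, Basis.toMatrix_apply, mul_comm]
  rw [AddSubgroup.relIndex_closure_eq_natAbs_det hv (u.linearIndependent.comp f f.injective) C hc,
    hA, Matrix.gcd_det_submatrix_submatrix_mul hU, Int.natCast_natAbs, Int.abs_eq_normalize]

instance isLocalizedModule_intCastPi (n : ℕ) :
    IsLocalizedModule (nonZeroDivisors ℤ) (intCastPi n).toIntLinearMap := by
  have : (intCastPi n).toIntLinearMap = .pi fun i => Algebra.linearMap ℤ ℚ ∘ₗ .proj i := rfl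
  rw [this]
  infer_instance

theorem stmt3_general (n k : ℕ) (v : Fin k → Fin n → ℤ)
    (hli : LinearIndependent ℚ fun i => (intCastPi n) (v i)) :
    (AddSubgroup.closure (Set.range v)).relIndex
        (AddSubgroup.comap (intCastPi n)
          (Submodule.span ℚ (Set.range fun i => (intCastPi n) (v i))).toAddSubgroup) ≠ 0 ∧
    ((AddSubgroup.closure (Set.range v)).relIndex
        (AddSubgroup.comap (intCastPi n)
          (Submodule.span ℚ (Set.range fun i => (intCastPi n) (v i))).toAddSubgroup) : ℤ)
      = Finset.univ.gcd (fun r : Fin k ↪ Fin n =>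
          ((Matrix.of fun (i : Fin n) (j : Fin k) => v j i).submatrix
            (r : Fin k → Fin n) id).det) := by
  let φ := (intCastPi n).toIntLinearMap
  have hv : LinearIndependent ℤ v := ((LinearIndependent.iff_fractionRing ℤ ℚ).mpr hli).of_comp φ
  obtain ⟨u, f, hsat⟩ := exists_basis_comap_span_eq_span (K := ℚ) (Pi.basisFun ℤ (Fin n)) φ hv
  have hL : AddSubgroup.comap (intCastPi n)
      (span ℚ (range fun i => intCastPi n (v i))).toAddSubgroup =
      AddSubgroup.closure (range (u ∘ f)) := by
    rw [← span_int_eq_addSubgroupClosure, ← hsat]; rfl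
  have hvu (j : Fin k) : v j ∈ span ℤ (range (u ∘ f)) := by
    rw [← hsat]; exact subset_span (mem_range_self j)
  have hindex := relIndex_closure_eq_gcd_det_submatrix u f hv hvu
  rw [hL]
  refine ⟨fun h => ?_, hindex⟩
  apply Matrix.gcd_det_submatrix_ne_zero (M := .of fun i j => v j i) hli
  rw [← hindex, h, Nat.cast_zero]

/-- for `v₁,…,v_k ∈ ℤⁿ` linearly independent over `ℚ` (with `k ≤ n`), the
subgroup `S = span_ℤ{v₁,…,v_k}` has finite index inside the subgroup
`L = {x ∈ ℤⁿ : x ∈ span_ℚ{v₁,…,v_k}}`, and this index `[L : S]` equals the greatest common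
divisor of all `k × k` minors of the `n × k` matrix `(v₁ | … | v_k)`. -/
theorem stmt3 (n k : ℕ) (hk : 1 ≤ k) (hkn : k ≤ n) (v : Fin k → Fin n → ℤ)
    (hli : LinearIndependent ℚ fun i => (intCastPi n) (v i)) :
    (AddSubgroup.closure (Set.range v)).relIndex
        (AddSubgroup.comap (intCastPi n)
          (Submodule.span ℚ (Set.range fun i => (intCastPi n) (v i))).toAddSubgroup) ≠ 0 ∧
    ((AddSubgroup.closure (Set.range v)).relIndex
        (AddSubgroup.comap (intCastPi n)
          (Submodule.span ℚ (Set.range fun i => (intCastPi n) (v i))).toAddSubgroup) : ℤ)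
      = Finset.univ.gcd (fun r : Fin k ↪ Fin n =>
          ((Matrix.of fun (i : Fin n) (j : Fin k) => v j i).submatrix
            (r : Fin k → Fin n) id).det) :=
  stmt3_general n k v hli
end

section
/- Let n ≥ 1, let v ∈ ℤⁿ be primitive (the gcd of its coordinates is 1), let λ ∈ ℝ, and let P = {y ∈ ℝⁿ : ⟨y, v⟩ + λ = 0} be the corresponding rational affine hyperplane. Suppose Φ is an n×n integer matrix with det Φ = ±1 and c ∈ ℝⁿ are such that the affine map φ(y) = Φy + c maps P onto the coordinate hyperplane {x ∈ ℝⁿ : xₙ = 0}. Then for every x ∈ ℝⁿ, the absolute value of the n-th coordinate of Φx + c equals |⟨x, v⟩ + λ|. -/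
/-!
The `n`-th coordinate of `Φy + c` is an affine functional vanishing on `P`, hence equal to
`t (⟨y, v⟩ + λ)` for some real `t`; so the `n`-th row of `Φ` is `t v`. That row is primitive,
since `Φ` is invertible over `ℤ`, and `v` is primitive, which forces `t = ±1`.
-/

open Matrix

theorem exists_eq_smul_of_dotProduct_add_eq_zero_imp {K ι : Type*} [Field K] [Fintype ι]
    {a b : ι → K} {d μ : K} (hb : b ≠ 0)
    (h : ∀ y, b ⬝ᵥ y + μ = 0 → a ⬝ᵥ y + d = 0) : ∃ t, a = t • b ∧ d = t * μ := by
  classical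
  obtain ⟨k, hk⟩ : ∃ k, b k ≠ 0 := Function.ne_iff.mp hb
  refine ⟨a k / b k, ?_⟩
  -- Move `y` onto the hyperplane along the `k`-th coordinate axis.
  have hmul : ∀ y, a ⬝ᵥ y + d = a k / b k * (b ⬝ᵥ y + μ) := by
    intro y
    have hy := h (y - ((b ⬝ᵥ y + μ) / b k) • Pi.single k 1) (by
      simp only [dotProduct_sub, dotProduct_smul, dotProduct_single, mul_one, smul_eq_mul]
      field_simp
      ring)
    simp only [dotProduct_sub, dotProduct_smul, dotProduct_single, mul_one, smul_eq_mul] at hy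
    linear_combination hy
  have hd : d = a k / b k * μ := by simpa using hmul 0
  refine ⟨funext fun j => ?_, hd⟩
  have := hmul (Pi.single j 1)
  simp only [dotProduct_single, mul_one, hd] at this
  simp only [Pi.smul_apply, smul_eq_mul]
  linear_combination this

theorem abs_eq_one_of_intCast_eq_smul_of_primitive {ι : Type*} [Fintype ι] {v w u : ι → ℤ}
    {t : ℝ} (hv : Finset.univ.gcd v = 1) (hwv : ((↑) ∘ w : ι → ℝ) = t • ((↑) ∘ v : ι → ℝ))
    (hwu : w ⬝ᵥ u = 1) : |t| = 1 := by
  set m := v ⬝ᵥ u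
  have htm : t * m = 1 := by
    have : ((w ⬝ᵥ u : ℤ) : ℝ) = 1 := by exact_mod_cast hwu
    rw [← this]
    push_cast [m, dotProduct, Finset.mul_sum]
    refine Finset.sum_congr rfl fun j _ => ?_
    rw [show (w j : ℝ) = t * v j from congrFun hwv j]
    ring
  have hmv : ∀ j, m ∣ v j := fun j => ⟨w j, by
    have : ((v j : ℤ) : ℝ) = m * w j := by
      rw [show (w j : ℝ) = t * v j from congrFun hwv j]
      linear_combination (-(v j : ℝ)) * htm
    exact_mod_cast this⟩
  have hm : IsUnit m := isUnit_of_dvd_one (hv ▸ Finset.dvd_gcd fun j _ => hmv j)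
  rcases Int.isUnit_iff.mp hm with h | h <;> rw [h] at htm <;> push_cast at htm
  · simp [show t = 1 by linarith]
  · simp [show t = -1 by linarith]

theorem Matrix.exists_row_dotProduct_eq_one {ι : Type*} [Fintype ι] [DecidableEq ι]
    {Φ : Matrix ι ι ℤ} (hΦ : IsUnit Φ.det) (i : ι) : ∃ u, Φ i ⬝ᵥ u = 1 :=
  ⟨fun j => Φ⁻¹ j i, by
    simpa [Matrix.mul_apply'] using congrFun (congrFun (Φ.mul_nonsing_inv hΦ) i) i⟩

/-- let `v ∈ ℤⁿ` be primitive (gcd of its coordinates is `1`), `λ ∈ ℝ`, and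
`P = {y ∈ ℝⁿ : ⟨y, v⟩ + λ = 0}`.  If the integral affine map `φ(y) = Φy + c`, with
`Φ ∈ GL(n;ℤ)` (integer matrix of determinant `±1`) and `c ∈ ℝⁿ`, maps `P` onto the
coordinate hyperplane `{xₙ = 0}`, then for every `x ∈ ℝⁿ` the absolute value of the `n`-th
coordinate of `φ(x)` equals `|⟨x, v⟩ + λ|`. -/
theorem stmt13 (n : ℕ) (hn : 0 < n) (v : Fin n → ℤ) (hv : Finset.univ.gcd v = 1)
    (lam : ℝ) (Φ : Matrix (Fin n) (Fin n) ℤ) (hΦ : Φ.det = 1 ∨ Φ.det = -1) (c : Fin n → ℝ)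
    (hmap : (fun y : Fin n → ℝ => (Φ.map (fun m : ℤ => (m : ℝ))).mulVec y + c) ''
        {y : Fin n → ℝ | (∑ j, y j * (v j : ℝ)) + lam = 0}
      = {x : Fin n → ℝ | x ⟨n - 1, Nat.sub_lt hn Nat.one_pos⟩ = 0}) :
    ∀ x : Fin n → ℝ,
      |((Φ.map (fun m : ℤ => (m : ℝ))).mulVec x + c) ⟨n - 1, Nat.sub_lt hn Nat.one_pos⟩|
        = |(∑ j, x j * (v j : ℝ)) + lam| := by
  set i : Fin n := ⟨n - 1, Nat.sub_lt hn Nat.one_pos⟩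
  have hrow : ∀ y, ((Φ.map (fun m : ℤ => (m : ℝ))) *ᵥ y + c) i
      = ((↑) ∘ Φ i : Fin n → ℝ) ⬝ᵥ y + c i := fun y => rfl
  have hsub : ∀ y, ((↑) ∘ v : Fin n → ℝ) ⬝ᵥ y + lam = 0 → ((↑) ∘ Φ i) ⬝ᵥ y + c i = 0 := by
    intro y hy
    rw [← hrow]
    refine (hmap.subset ⟨y, ?_, rfl⟩ :)
    change y ⬝ᵥ ((↑) ∘ v) + lam = 0
    rwa [dotProduct_comm]
  have hv0 : ((↑) ∘ v : Fin n → ℝ) ≠ 0 := fun h0 => by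
    rw [Finset.gcd_eq_zero_iff.mpr fun j _ => Int.cast_eq_zero.mp (congrFun h0 j)] at hv
    exact zero_ne_one hv
  obtain ⟨t, hΦv, hct⟩ := exists_eq_smul_of_dotProduct_add_eq_zero_imp hv0 hsub
  obtain ⟨u, hu⟩ := Φ.exists_row_dotProduct_eq_one (by rcases hΦ with h | h <;> simp [h]) i
  have ht := abs_eq_one_of_intCast_eq_smul_of_primitive hv hΦv hu
  intro x
  rw [hrow, hΦv, hct, smul_dotProduct, smul_eq_mul, ← mul_add, abs_mul, ht, one_mul,
    dotProduct_comm]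
  rfl
end
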